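/- arXiv:1509.05198 — 3 statements merged into one kernel-verified Lean document; each statement's English description precedes it below -/
import Mathlib

section
/- Let F be a finite field of characteristic 2 in which tr(1) = 1 (i.e. |F| = 2^k with k odd), and let a ∈ F. Then for all distinct x, y ∈ F, exactly one of tr((xy + x + a)/(x + y)) = 0 and tr((xy + y + a)/(x + y)) = 0 holds; hence the relation 'tr((xy + x + a)/(x + y)) = 0' orients each pair {x, y} in exactly one direction (it defines a tournament on F). -/
/-- The absolute trace `tr(x) = x + x² + x⁴ + ⋯ + x^{2^{k-1}}` of a finite field
of order `2^k`, taking values in the prime subfield `{0, 1} ⊆ F`. -/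
def fieldTr {F : Type*} [Field F] (k : ℕ) (x : F) : F :=
  ∑ i ∈ Finset.range k, x ^ (2 ^ i)

lemma fieldTr_add {F : Type*} [Field F] [CharP F 2] (k : ℕ) (u v : F) :
    fieldTr k (u + v) = fieldTr k u + fieldTr k v := by
  unfold fieldTr
  rw [← Finset.sum_add_distrib]
  exact Finset.sum_congr rfl fun i _ => add_pow_char_pow u v 2 i

lemma fieldTr_sq {F : Type*} [Field F] [Fintype F] [CharP F 2] (k : ℕ)
    (hcard : Fintype.card F = 2 ^ k) (x : F) :
    fieldTr k x * fieldTr k x = fieldTr k x := by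
  have h1 : fieldTr k x * fieldTr k x = ∑ i ∈ Finset.range k, x ^ (2 ^ (i + 1)) := by
    rw [← sq]
    have : fieldTr k x ^ 2 = frobenius F 2 (fieldTr k x) := rfl
    rw [this]
    unfold fieldTr
    rw [map_sum]
    exact Finset.sum_congr rfl fun i _ => by
      show (x ^ 2 ^ i) ^ 2 = _
      rw [← pow_mul, pow_succ]
  have h2 : (∑ i ∈ Finset.range k, x ^ (2 ^ (i + 1))) + x ^ (2 ^ 0)
      = ∑ i ∈ Finset.range (k + 1), x ^ (2 ^ i) :=
    (Finset.sum_range_succ' (fun i => x ^ (2 ^ i)) k).symm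
  have hxk : x ^ (2 ^ k) = x := by rw [← hcard]; exact FiniteField.pow_card x
  rw [Finset.sum_range_succ, hxk] at h2
  have h3 : (∑ i ∈ Finset.range k, x ^ (2 ^ (i + 1))) + x = fieldTr k x + x := by
    simpa [fieldTr] using h2
  rw [h1]
  exact add_right_cancel h3

lemma fieldTr_mem {F : Type*} [Field F] [Fintype F] [CharP F 2] (k : ℕ)
    (hcard : Fintype.card F = 2 ^ k) (x : F) :
    fieldTr k x = 0 ∨ fieldTr k x = 1 := by
  have := fieldTr_sq k hcard x
  have : fieldTr k x * (fieldTr k x - 1) = 0 := by ring_nf; linear_combination this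
  rcases mul_eq_zero.mp this with h | h
  · exact Or.inl h
  · exact Or.inr (by linear_combination h)

theorem trace_adjacency_tournament_of_odd
    {F : Type*} [Field F] [Fintype F] [CharP F 2] (k : ℕ)
    (hcard : Fintype.card F = 2 ^ k) (htr1 : fieldTr k (1 : F) = 1) (a : F) :
    ∀ x y : F, x ≠ y →
      Xor' (fieldTr k ((x * y + x + a) / (x + y)) = 0)
        (fieldTr k ((x * y + y + a) / (x + y)) = 0) := by
  intro x y hxy
  have hxyne : x + y ≠ 0 := by
    intro h
    apply hxy
    have h2 : (2 : F) = 0 := by exact_mod_cast CharP.cast_eq_zero F 2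
    linear_combination h - y * h2
  have hsum : (x * y + x + a) / (x + y) + (x * y + y + a) / (x + y) = 1 := by
    rw [← add_div, div_eq_one_iff_eq hxyne]
    have h2 : (2 : F) = 0 := by exact_mod_cast CharP.cast_eq_zero F 2
    linear_combination (x * y + a) * h2
  have key : fieldTr k ((x * y + x + a) / (x + y)) + fieldTr k ((x * y + y + a) / (x + y)) = 1 := by
    rw [← fieldTr_add, hsum, htr1]
  rcases fieldTr_mem k hcard ((x * y + x + a) / (x + y)) with hA | hA <;>
    rcases fieldTr_mem k hcard ((x * y + y + a) / (x + y)) with hB | hB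
  · rw [hA, hB] at key; simp at key
  · exact Or.inl ⟨hA, by rw [hB]; exact one_ne_zero⟩
  · exact Or.inr ⟨hB, by rw [hA]; exact one_ne_zero⟩
  · rw [hA, hB] at key
    exfalso
    have h2 : (2 : F) = 0 := by exact_mod_cast CharP.cast_eq_zero F 2
    have : (1 : F) = 0 := by linear_combination h2 - key
    exact one_ne_zero this
end

section
/- Assume k is even and tr(a) = 1. Then the graph G_k(a) is vertex-transitive: for any two vertices u and v there is a graph automorphism of G_k(a) mapping u to v. -/
/-- The defining relation of the graph `G_k(a)` on the vertex set `F ∪ {∞}`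
(with `∞ = none`): distinct `x, y ∈ F` are related iff
`tr((xy + x + a)/(x + y)) = 0`, and `x ∈ F` is related to `∞` iff `tr(x) = 0`. -/
def adjRel {F : Type*} [Field F] (k : ℕ) (a : F) : Option F → Option F → Prop
  | some x, some y => fieldTr k ((x * y + x + a) / (x + y)) = 0
  | some x, none   => fieldTr k x = 0
  | none,   some y => fieldTr k y = 0
  | none,   none   => False

/-- The graph `G_k(a)` on the vertex set `F ∪ {∞}`.  (When `tr(1) = 0`, the
relation `adjRel` is symmetric on distinct vertices, so `fromRel` produces
exactly the graph whose adjacency is given by `adjRel`.) -/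
def Gka {F : Type*} [Field F] (k : ℕ) (a : F) : SimpleGraph (Option F) :=
  SimpleGraph.fromRel (adjRel k a)

section Trace

variable {F : Type*} [Field F] {k : ℕ}

theorem fieldTr_zero : fieldTr k (0 : F) = 0 := by
  simp [fieldTr]

variable [CharP F 2]

theorem fieldTr_add_s7 (x y : F) : fieldTr k (x + y) = fieldTr k x + fieldTr k y := by
  rw [fieldTr, fieldTr, fieldTr, ← Finset.sum_add_distrib]
  exact Finset.sum_congr rfl fun i _ => add_pow_char_pow x y 2 i

theorem fieldTr_one_of_even (hk : Even k) : fieldTr k (1 : F) = 0 := by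
  simpa [fieldTr] using (CharP.cast_eq_zero_iff F 2 k).mpr hk.two_dvd

theorem fieldTr_add_one (hk : Even k) (x : F) : fieldTr k (x + 1) = fieldTr k x := by
  rw [fieldTr_add_s7, fieldTr_one_of_even hk, add_zero]

theorem fieldTr_sq_add_self (x : F) : fieldTr k (x ^ 2 + x) = x ^ 2 ^ k + x := by
  have h := Finset.sum_range_sub (fun i => x ^ 2 ^ i) k
  simp only [CharTwo.sub_eq_add, pow_zero, pow_one] at h
  rw [← h, fieldTr]
  refine Finset.sum_congr rfl fun i _ => ?_
  rw [add_pow_char_pow, ← pow_mul, ← pow_succ']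

theorem sq_add_self_add_ne_zero [Fintype F] (hcard : Fintype.card F = 2 ^ k) {a : F}
    (ha : fieldTr k a = 1) (c : F) : c ^ 2 + c + a ≠ 0 := by
  intro h
  have h1 : fieldTr k (c ^ 2 + c + a) = 1 := by
    rw [fieldTr_add_s7, fieldTr_sq_add_self, ← hcard, FiniteField.pow_card, CharTwo.add_self_eq_zero,
      ha, zero_add]
  rw [h, fieldTr_zero] at h1
  exact zero_ne_one h1

end Trace

section Inversion

variable {F : Type*} [Field F] {b c x : F}

def inversion (c b x : F) : F := c + b / (x - c)

noncomputable def projInversion (c b : F) : Option F → Option F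
  | none => some c
  | some x => by classical exact if x = c then none else some (inversion c b x)

theorem projInversion_none : projInversion c b none = some c := rfl

theorem projInversion_center : projInversion c b (some c) = none := by
  simp [projInversion]

theorem projInversion_of_ne (hx : x ≠ c) :
    projInversion c b (some x) = some (inversion c b x) := by
  simp [projInversion, hx]

theorem inversion_ne_center (hb : b ≠ 0) (hx : x ≠ c) : inversion c b x ≠ c := by
  simpa [inversion, sub_eq_zero] using And.intro hb hx

theorem inversion_inversion (hb : b ≠ 0) : inversion c b (inversion c b x) = x := by
  rw [inversion, inversion, add_sub_cancel_left, div_div_cancel₀ hb, add_sub_cancel]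

theorem projInversion_involutive (hb : b ≠ 0) : Function.Involutive (projInversion c b) := by
  rintro (_ | x)
  · rw [projInversion_none, projInversion_center]
  · rcases eq_or_ne x c with rfl | hx
    · rw [projInversion_center, projInversion_none]
    · rw [projInversion_of_ne hx, projInversion_of_ne (inversion_ne_center hb hx),
        inversion_inversion hb]

end Inversion

section CharTwo

variable {F : Type*} [Field F] [CharP F 2] {a b c x y : F}

theorem adjQuotient_inversion (hab : c ^ 2 + c + a = b) (hb : b ≠ 0) (hx : x ≠ c) (hy : y ≠ c)
    (hxy : x ≠ y) :
    (inversion c b x * inversion c b y + inversion c b x + a) /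
      (inversion c b x + inversion c b y) = (y * x + y + a) / (y + x) := by
  obtain rfl : a = b + c ^ 2 + c := by
    linear_combination hab - (c ^ 2 + c) * CharTwo.two_eq_zero (R := F)
  have hxc : x - c ≠ 0 := sub_ne_zero.mpr hx
  have hyc : y - c ≠ 0 := sub_ne_zero.mpr hy
  have hyx : y + x ≠ 0 := by rwa [← CharTwo.sub_eq_add, sub_ne_zero, ne_comm]
  have hden : inversion c b x + inversion c b y = b * (y + x) / ((x - c) * (y - c)) := by
    rw [inversion, inversion]
    field_simp
    ring_nf
    reduce_mod_char!
  rw [hden]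
  simp only [inversion]
  field_simp
  ring_nf
  reduce_mod_char!

theorem adjQuotient_center_inversion (hab : c ^ 2 + c + a = b) (hb : b ≠ 0) (hy : y ≠ c) :
    (c * inversion c b y + c + a) / (c + inversion c b y) = y := by
  obtain rfl : a = b + c ^ 2 + c := by
    linear_combination hab - (c ^ 2 + c) * CharTwo.two_eq_zero (R := F)
  have hyc : y - c ≠ 0 := sub_ne_zero.mpr hy
  rw [inversion, ← add_assoc c c, CharTwo.add_self_eq_zero, zero_add]
  field_simp
  ring_nf
  reduce_mod_char!

end CharTwo

section Graph

variable {F : Type*} [Field F] [CharP F 2] {k : ℕ} {a b c : F}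

theorem adjRel_comm (hk : Even k) {u v : Option F} : adjRel k a u v ↔ adjRel k a v u := by
  rcases u with _ | x <;> rcases v with _ | y
  iterate 3 rfl
  rcases eq_or_ne x y with rfl | hxy
  · rfl
  have hxy' : x + y ≠ 0 := by rwa [← CharTwo.sub_eq_add, sub_ne_zero]
  -- the two quotients differ by `1`, whose trace vanishes
  have h : (x * y + x + a) / (x + y) = (y * x + y + a) / (y + x) + 1 := by
    rw [add_comm y x]
    field_simp
    ring_nf
    reduce_mod_char!
  change fieldTr k _ = 0 ↔ fieldTr k _ = 0
  rw [h, fieldTr_add_one hk]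

theorem Gka_adj (hk : Even k) {u v : Option F} :
    (Gka k a).Adj u v ↔ u ≠ v ∧ adjRel k a u v := by
  rw [Gka, SimpleGraph.fromRel_adj, or_iff_left_of_imp (adjRel_comm hk).mp]

theorem adjRel_projInversion (hk : Even k) (hab : c ^ 2 + c + a = b) (hb : b ≠ 0)
    {u v : Option F} (huv : u ≠ v) :
    adjRel k a (projInversion c b u) (projInversion c b v) ↔ adjRel k a u v := by
  have h_inf : ∀ y : F, adjRel k a (projInversion c b none) (projInversion c b (some y)) ↔
      adjRel k a none (some y) := by
    intro y
    rcases eq_or_ne y c with rfl | hy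
    · rw [projInversion_none, projInversion_center]
      rfl
    · rw [projInversion_none, projInversion_of_ne hy]
      change fieldTr k _ = 0 ↔ fieldTr k _ = 0
      rw [adjQuotient_center_inversion hab hb hy]
  -- `projInversion c b` swaps `∞` and `c`, so pairs through `c` reduce to pairs through `∞`
  have h_center : ∀ y : F, y ≠ c → (adjRel k a (projInversion c b (some c))
      (projInversion c b (some y)) ↔ adjRel k a (some c) (some y)) := by
    intro y hy
    have h := h_inf (inversion c b y)
    rw [← projInversion_of_ne hy, projInversion_involutive hb, projInversion_none] at h
    rw [projInversion_center]
    exact h.symm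
  rcases u with _ | x <;> rcases v with _ | y
  · exact absurd rfl huv
  · exact h_inf y
  · rw [adjRel_comm hk, h_inf x, adjRel_comm hk]
  rcases eq_or_ne x c with rfl | hx
  · exact h_center y (Ne.symm (by simpa using huv))
  rcases eq_or_ne y c with rfl | hy
  · rw [adjRel_comm hk, h_center x hx, adjRel_comm hk]
  rw [projInversion_of_ne hx, projInversion_of_ne hy]
  change fieldTr k _ = 0 ↔ _
  rw [adjQuotient_inversion hab hb hx hy (by simpa using huv)]
  exact adjRel_comm (u := some y) (v := some x) hk

noncomputable def projInversionIso (hk : Even k) (hb : c ^ 2 + c + a ≠ 0) :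
    Gka k a ≃g Gka k a where
  toEquiv := (projInversion_involutive hb).toPerm
  map_rel_iff' {u v} := by
    rw [Gka_adj hk, Gka_adj hk]
    simp only [Function.Involutive.coe_toPerm, (projInversion_involutive hb).injective.ne_iff]
    exact and_congr_right (adjRel_projInversion hk rfl hb)

end Graph

theorem SimpleGraph.exists_iso_apply_eq_of_base {V : Type*} {G : SimpleGraph V} (v₀ : V)
    (h : ∀ w, ∃ φ : G ≃g G, φ v₀ = w) (u v : V) : ∃ φ : G ≃g G, φ u = v := by
  obtain ⟨φ, rfl⟩ := h u
  obtain ⟨ψ, rfl⟩ := h v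
  exact ⟨φ.symm.trans ψ, by simp⟩

theorem Gka_vertex_transitive
    {F : Type*} [Field F] [Fintype F] [CharP F 2] (k : ℕ) (hk : Even k)
    (hcard : Fintype.card F = 2 ^ k) (a : F) (ha : fieldTr k a = 1) :
    ∀ u v : Option F, ∃ φ : Gka k a ≃g Gka k a, φ u = v := by
  refine SimpleGraph.exists_iso_apply_eq_of_base none fun w => ?_
  cases w with
  | none => exact ⟨.refl, rfl⟩
  | some c => exact ⟨projInversionIso hk (sq_add_self_add_ne_zero hcard ha c), rfl⟩
end

section
/- Let F be a finite field of characteristic 2 with |F| = q. Then there exists a ∈ F with tr(a) = 1 such that the 2×2 matrix M = [[0, a], [1, 1]] over F has the property that the least n ≥ 1 for which M^n is a scalar matrix is n = q + 1 (equivalently, the Möbius map z ↦ a/(z+1) acts on the projective line PG(1, q) as a cyclic permutation of order q + 1). -/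
theorem sum_range_sq_add_self_pow_two_pow {R : Type*} [CommRing R] [CharP R 2] (y : R) (k : ℕ) :
    ∑ i ∈ Finset.range k, (y ^ 2 + y) ^ 2 ^ i = y ^ 2 ^ k + y := by
  induction k with
  | zero => simp [CharTwo.add_self_eq_zero]
  | succ k ih =>
    rw [Finset.sum_range_succ, ih, add_pow_char_pow, ← pow_mul, ← pow_succ']
    linear_combination y ^ 2 ^ k * CharTwo.two_eq_zero (R := R)

theorem algebraMap_fieldTr_of_sq_add_self {K L : Type*} [Field K] [CommRing L] [Algebra K L]
    [CharP L 2] {a : K} {y : L} (hy : y ^ 2 + y = algebraMap K L a) (k : ℕ) :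
    algebraMap K L (fieldTr k a) = y ^ 2 ^ k + y := by
  simp only [fieldTr, map_sum, map_pow, ← hy, sum_range_sq_add_self_pow_two_pow]

theorem mul_algebraMap_mem_range_algebraMap_iff {K L : Type*} [Field K] [Semiring L]
    [Algebra K L] {x : L} {c : K} (hc : c ≠ 0) :
    x * algebraMap K L c ∈ Set.range (algebraMap K L) ↔ x ∈ Set.range (algebraMap K L) := by
  constructor
  · rintro ⟨d, hd⟩
    refine ⟨d * c⁻¹, ?_⟩
    rw [map_mul, hd, mul_assoc, ← map_mul, mul_inv_cancel₀ hc, map_one, mul_one]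
  · rintro ⟨d, rfl⟩
    exact ⟨d * c, map_mul _ _ _⟩

theorem exists_injective_algHom_matrix_of_mul_self_eq {K L : Type*} [Field K] [Ring L]
    [Nontrivial L] [Algebra K L] (hL : Module.finrank K L = 2) {y : L}
    (hy : y ∉ Set.range (algebraMap K L)) {c₀ c₁ : K}
    (hyy : y * y = algebraMap K L c₀ + algebraMap K L c₁ * y) :
    ∃ φ : L →ₐ[K] Matrix (Fin 2) (Fin 2) K,
      Function.Injective φ ∧ φ y = !![0, c₀; 1, c₁] := by
  have hli : LinearIndependent K ![1, y] :=
    (LinearIndependent.pair_iff' one_ne_zero).2 fun a ha =>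
      hy ⟨a, by rw [Algebra.algebraMap_eq_smul_one, ha]⟩
  let b := basisOfLinearIndependentOfCardEqFinrank hli (by rw [Fintype.card_fin, hL])
  have hb : ⇑b = ![1, y] := coe_basisOfLinearIndependentOfCardEqFinrank hli _
  have hy0 : y * b 0 = b 1 := by simp [hb]
  have hy1 : y * b 1 = c₀ • b 0 + c₁ • b 1 := by
    simp [hb, hyy, Algebra.smul_def]
  refine ⟨Algebra.leftMulMatrix b, Algebra.leftMulMatrix_injective b, ?_⟩
  ext i j
  rw [Algebra.leftMulMatrix_eq_repr_mul]
  fin_cases i <;> fin_cases j <;> simp [hy0, hy1]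

theorem exists_pow_eq_smul_one_iff_pow_mem_range_algebraMap {K L : Type*} [Field K] [Ring L]
    [Nontrivial L] [Algebra K L] (hL : Module.finrank K L = 2) {y : L}
    (hy : y ∉ Set.range (algebraMap K L)) {c₀ c₁ : K}
    (hyy : y * y = algebraMap K L c₀ + algebraMap K L c₁ * y) (n : ℕ) :
    (∃ c : K, !![0, c₀; 1, c₁] ^ n = c • (1 : Matrix (Fin 2) (Fin 2) K)) ↔
      y ^ n ∈ Set.range (algebraMap K L) := by
  obtain ⟨φ, hφ, hφy⟩ := exists_injective_algHom_matrix_of_mul_self_eq hL hy hyy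
  simp only [Set.mem_range, ← hφy, ← map_pow, ← Algebra.algebraMap_eq_smul_one,
    ← φ.commutes, hφ.eq_iff, eq_comm]

namespace FiniteField

variable {K L : Type*} [Field K] [Fintype K] [Field L] [Fintype L] [Algebra K L]

local notation "q" => Fintype.card K

theorem mem_range_algebraMap_iff_pow_card_eq_self (x : L) :
    x ∈ Set.range (algebraMap K L) ↔ x ^ q = x := by
  refine ⟨?_, fun hx => (IsGalois.mem_range_algebraMap_iff_fixed x).2 fun f => ?_⟩
  · rintro ⟨a, rfl⟩
    rw [← map_pow, pow_card]
  · obtain ⟨n, rfl⟩ := (bijective_frobeniusAlgEquivOfAlgebraic_pow K L).2 f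
    rw [AlgEquiv.coe_pow, coe_frobeniusAlgEquivOfAlgebraic]
    exact Function.iterate_fixed hx n

theorem pow_card_pow_finrank (x : L) : x ^ q ^ Module.finrank K L = x := by
  rw [← Module.card_eq_pow_finrank, pow_card]

theorem add_pow_card_mem_range_algebraMap (hL : Module.finrank K L = 2) (x : L) :
    x + x ^ q ∈ Set.range (algebraMap K L) := by
  have hfrob := map_add (frobeniusAlgHom K L) x (x ^ q)
  simp only [frobeniusAlgHom_apply] at hfrob
  rw [mem_range_algebraMap_iff_pow_card_eq_self, hfrob, ← pow_mul, ← sq, ← hL,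
    pow_card_pow_finrank, add_comm]

theorem pow_mem_range_algebraMap_iff_dvd {g : L}
    (hg : orderOf g = q ^ 2 - 1) (n : ℕ) :
    g ^ n ∈ Set.range (algebraMap K L) ↔ q + 1 ∣ n := by
  have hq : 1 < q := Fintype.one_lt_card
  have hg0 : g ≠ 0 := by
    rintro rfl
    rw [orderOf_eq_zero_iff'.2 fun n hn => by simp [hn.ne']] at hg
    have := Nat.one_lt_pow two_ne_zero hq
    omega
  have hsplit : (g ^ n) ^ q = g ^ (n * (q - 1)) * g ^ n := by
    rw [← pow_add, ← pow_mul, Nat.mul_sub_one,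
      Nat.sub_add_cancel (Nat.le_mul_of_pos_right n (by omega))]
  calc g ^ n ∈ Set.range (algebraMap K L) ↔ g ^ (n * (q - 1)) * g ^ n = 1 * g ^ n := by
        rw [mem_range_algebraMap_iff_pow_card_eq_self, hsplit, one_mul]
    _ ↔ q ^ 2 - 1 ∣ n * (q - 1) := by
        rw [mul_left_inj' (pow_ne_zero n hg0), ← hg, orderOf_dvd_iff_pow_eq_one]
    _ ↔ q + 1 ∣ n := by
        rw [show q ^ 2 - 1 = (q + 1) * (q - 1) by rw [← Nat.sq_sub_sq, one_pow],
          Nat.mul_dvd_mul_iff_right (by omega)]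

theorem exists_add_pow_card_eq_one_and_pow_mem_range_algebraMap_iff
    (hL : Module.finrank K L = 2) :
    ∃ y : L, y + y ^ q = 1 ∧
      ∀ n, y ^ n ∈ Set.range (algebraMap K L) ↔ q + 1 ∣ n := by
  have hq : 1 < q := Fintype.one_lt_card
  obtain ⟨g, hg⟩ := IsCyclic.exists_ofOrder_eq_natCard (α := Lˣ)
  have hpow := pow_mem_range_algebraMap_iff_dvd (K := K) (g := (g : L)) (by
    rw [orderOf_units, hg, Nat.card_units, Nat.card_eq_fintype_card,
      Module.card_eq_pow_finrank (K := K), hL])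
  obtain ⟨s, hs⟩ := add_pow_card_mem_range_algebraMap hL (g : L)
  -- `g + g ^ q = 0` would put `g ^ 2` in `K`, but `q + 1 ∤ 2`
  have hs0 : s ≠ 0 := by
    rintro rfl
    rw [map_zero] at hs
    have hgq : (g : L) ^ q = -g := by linear_combination -hs
    have hg2 : ((g : L) ^ 2) ^ q = (g : L) ^ 2 := by
      rw [← pow_mul, mul_comm, pow_mul, hgq, neg_sq]
    have := Nat.le_of_dvd two_pos
      ((hpow 2).1 ((mem_range_algebraMap_iff_pow_card_eq_self _).2 hg2))
    omega
  refine ⟨g * algebraMap K L s⁻¹, ?_, fun n => ?_⟩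
  · rw [mul_pow, ← map_pow, pow_card, ← add_mul, ← hs, ← map_mul, mul_inv_cancel₀ hs0,
      map_one]
  · rw [mul_pow, ← map_pow,
      mul_algebraMap_mem_range_algebraMap_iff (pow_ne_zero n (inv_ne_zero hs0)), hpow]

end FiniteField

theorem exists_trace_one_mobius_order_card_add_one
    {F : Type*} [Field F] [Fintype F] [CharP F 2] (k : ℕ)
    (hcard : Fintype.card F = 2 ^ k) :
    ∃ a : F, fieldTr k a = 1 ∧
      IsLeast {n : ℕ | 1 ≤ n ∧ ∃ c : F,
          (!![0, a; 1, 1]) ^ n = c • (1 : Matrix (Fin 2) (Fin 2) F)}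
        (Fintype.card F + 1) := by
  let L := FiniteField.Extension F 2 2
  have : Fintype L := Fintype.ofFinite L
  have : CharP L 2 := charP_of_injective_algebraMap' F 2
  have hL : Module.finrank F L = 2 := FiniteField.finrank_extension F 2 2
  obtain ⟨y, hytr, hypow⟩ :=
    FiniteField.exists_add_pow_card_eq_one_and_pow_mem_range_algebraMap_iff hL
  obtain ⟨a, ha⟩ := (hypow _).2 (dvd_refl (Fintype.card F + 1))
  have hsq : y ^ 2 + y = algebraMap F L a := by
    rw [ha]
    linear_combination y * hytr + (y - y * y ^ Fintype.card F) * CharTwo.two_eq_zero (R := L)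
  have hy : y ∉ Set.range (algebraMap F L) := fun h => by
    have := Nat.le_of_dvd one_pos ((hypow 1).1 (by rwa [pow_one]))
    have := Fintype.card_pos (α := F)
    omega
  have hyy : y * y = algebraMap F L a + algebraMap F L 1 * y := by
    rw [map_one, one_mul, ← hsq]
    linear_combination -y * CharTwo.two_eq_zero (R := L)
  have hscalar (n : ℕ) :=
    (exists_pow_eq_smul_one_iff_pow_mem_range_algebraMap hL hy hyy n).trans (hypow n)
  refine ⟨a, (algebraMap F L).injective ?_, ⟨by omega, (hscalar _).2 dvd_rfl⟩,
    fun n ⟨hn, hc⟩ => Nat.le_of_dvd hn ((hscalar n).1 hc)⟩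
  rw [algebraMap_fieldTr_of_sq_add_self hsq, map_one, ← hcard, add_comm, hytr]
end
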